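/- arXiv:2401.03278 — 2 statements merged into one kernel-verified Lean document; each statement's English description precedes it below -/
import Mathlib

section
/- For all sufficiently large $x$, the number of $n \leq x$ with $E(n) \geq 3 \log\log x$ is $O(x / (\log x)^{\mu})$ where $\mu = 3\log 2 - 1 > 0$. -/
private lemma factorization_lt {n p : ℕ} (hp : p ∈ n.primeFactors) :
    n.factorization p < n := by
  obtain ⟨hprime, hdvd, hn⟩ := Nat.mem_primeFactors.mp hp
  calc n.factorization p < 2 ^ n.factorization p := by first | exact Nat.lt_two_pow_self | exact Nat.lt_two_pow_self _
    _ ≤ p ^ n.factorization p := Nat.pow_le_pow_left hprime.two_le _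
    _ ≤ n := Nat.le_of_dvd (Nat.pos_of_ne_zero hn) (Nat.ordProj_dvd n p)

/-- `towerE n` is the number of edges of the prime-tower tree of `n`:
`E(1) = 0`, `E` is additive on coprime factorizations, and `E(p^ν) = E(ν) + 1`. -/
def towerE (n : ℕ) : ℕ :=
  ∑ p ∈ n.primeFactors.attach, (towerE (n.factorization p.1) + 1)
decreasing_by
  exact factorization_lt p.2

/-!
Writing `ν_p` for the exponents of `n`, the recursion gives `2 ^ E(n) = ∏_p 2 · 2 ^ E(ν_p)`,
and `2 ^ E(ν) ≤ ν`, so `2 ^ E(n) ≤ ∏_p 2 ν_p`. The multiplicative function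
`T = 1_□ * σ₀` (the number of ways to write `n = a² b c`) has `T(p ^ ν) ≥ 2 ν`, hence dominates
`2 ^ E`, and `∑_{n ≤ N} T(n) = ∑_{a² ≤ N} ∑_{m ≤ N / a²} σ₀(m) ≤ 2 N (1 + log N)` because
`∑ 1 / a² ≤ 2`. Finally `E(n) ≥ 3 log log x` means `2 ^ E(n) ≥ (log x) ^ (3 log 2)`, and
Markov's inequality bounds the count by `4 x log x / (log x) ^ (3 log 2)`.
-/

open ArithmeticFunction Finset
open scoped ArithmeticFunction.sigma

lemma two_pow_towerE (n : ℕ) :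
    2 ^ towerE n = ∏ p ∈ n.primeFactors, 2 * 2 ^ towerE (n.factorization p) := by
  rw [towerE, ← prod_pow_eq_pow_sum,
    ← prod_attach n.primeFactors (fun p => 2 * 2 ^ towerE (n.factorization p))]
  exact prod_congr rfl fun p _ => by rw [pow_succ, mul_comm]

lemma two_pow_towerE_le_factorization_prod {n : ℕ} {g : ℕ → ℕ → ℕ}
    (hg : ∀ p ∈ n.primeFactors, 2 * 2 ^ towerE (n.factorization p) ≤ g p (n.factorization p)) :
    2 ^ towerE n ≤ n.factorization.prod g := by
  rw [two_pow_towerE, Finsupp.prod, Nat.support_factorization]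
  exact prod_le_prod' hg

lemma two_mul_le_two_pow (n : ℕ) : 2 * n ≤ 2 ^ n := by
  rcases n with _ | n
  · simp
  · rw [pow_succ']
    exact Nat.mul_le_mul_left 2 Nat.lt_two_pow_self

lemma two_pow_towerE_le_self {n : ℕ} (hn : n ≠ 0) : 2 ^ towerE n ≤ n := by
  induction n using Nat.strong_induction_on with
  | _ n ih =>
    conv_rhs => rw [← Nat.prod_factorization_pow_eq_self hn]
    refine two_pow_towerE_le_factorization_prod fun p hp => ?_
    have hν : n.factorization p ≠ 0 := Finsupp.mem_support_iff.mp (n.support_factorization ▸ hp)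
    calc 2 * 2 ^ towerE (n.factorization p)
        ≤ 2 * n.factorization p := by gcongr; exact ih _ (factorization_lt hp) hν
      _ ≤ 2 ^ n.factorization p := two_mul_le_two_pow _
      _ ≤ p ^ n.factorization p := by gcongr; exact (Nat.prime_of_mem_primeFactors hp).two_le

lemma Nat.Coprime.isSquare_mul_iff {m n : ℕ} (h : m.Coprime n) :
    IsSquare (m * n) ↔ IsSquare m ∧ IsSquare n := by
  refine ⟨fun ⟨r, hr⟩ => ?_, fun ⟨hm, hn⟩ => hm.mul hn⟩
  have hu : IsUnit (gcd m n) := Nat.isUnit_iff.mpr h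
  obtain ⟨a, ha⟩ := exists_eq_pow_of_mul_eq_pow hu (hr.trans (sq r).symm)
  obtain ⟨b, hb⟩ := exists_eq_pow_of_mul_eq_pow (Nat.isUnit_iff.mpr h.symm)
    ((mul_comm n m).trans (hr.trans (sq r).symm))
  exact ⟨⟨a, ha.trans (sq a)⟩, ⟨b, hb.trans (sq b)⟩⟩

def squareIndicator : ArithmeticFunction ℕ :=
  ⟨fun n => if n ≠ 0 ∧ IsSquare n then 1 else 0, by simp⟩

lemma squareIndicator_apply (n : ℕ) :
    squareIndicator n = if n ≠ 0 ∧ IsSquare n then 1 else 0 := rfl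

lemma isMultiplicative_squareIndicator : squareIndicator.IsMultiplicative := by
  refine IsMultiplicative.iff_ne_zero.mpr ⟨by simp [squareIndicator_apply], fun hm hn hmn => ?_⟩
  simp only [squareIndicator_apply, hmn.isSquare_mul_iff]
  split_ifs <;> simp_all

lemma two_mul_le_squareIndicator_mul_sigma_zero {p ν : ℕ} (hp : p.Prime) (hν : ν ≠ 0) :
    2 * ν ≤ (squareIndicator * σ 0) (p ^ ν) := by
  have hp0 : p ≠ 0 := hp.ne_zero
  rw [mul_apply]
  match ν, hν with
  | 1, _ =>
    calc 2 * 1 = squareIndicator 1 * σ 0 (p ^ 1) := by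
          rw [sigma_zero_apply_prime_pow hp, isMultiplicative_squareIndicator.map_one]; rfl
      _ ≤ _ := single_le_sum (f := fun x : ℕ × ℕ => squareIndicator x.1 * σ 0 x.2)
          (fun _ _ => Nat.zero_le _)
          (show ((1, p ^ 1) : ℕ × ℕ) ∈ _ from
            Nat.mem_divisorsAntidiagonal.mpr ⟨one_mul _, pow_ne_zero _ hp0⟩)
  | ν + 2, _ =>
    have hne : ((1, p ^ (ν + 2)) : ℕ × ℕ) ≠ (p ^ 2, p ^ ν) := fun h =>
      (Nat.one_lt_pow two_ne_zero hp.one_lt).ne (congrArg Prod.fst h)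
    calc 2 * (ν + 2)
        = ∑ x ∈ {(1, p ^ (ν + 2)), (p ^ 2, p ^ ν)}, squareIndicator x.1 * σ 0 x.2 := by
          rw [sum_pair hne]
          simp [squareIndicator_apply, sigma_zero_apply_prime_pow hp, hp0, IsSquare.sq]
          ring
      _ ≤ ∑ x ∈ (p ^ (ν + 2)).divisorsAntidiagonal, squareIndicator x.1 * σ 0 x.2 :=
          sum_le_sum_of_subset <| by simp [insert_subset_iff, hp0, ← pow_add, add_comm]

lemma two_pow_towerE_le_squareIndicator_mul_sigma_zero {n : ℕ} (hn : n ≠ 0) :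
    2 ^ towerE n ≤ (squareIndicator * σ 0) n := by
  rw [(isMultiplicative_squareIndicator.mul isMultiplicative_sigma).multiplicative_factorization _
    hn]
  refine two_pow_towerE_le_factorization_prod fun p hp => ?_
  have hν : n.factorization p ≠ 0 := Finsupp.mem_support_iff.mp (n.support_factorization ▸ hp)
  calc 2 * 2 ^ towerE (n.factorization p)
      ≤ 2 * n.factorization p := by gcongr; exact two_pow_towerE_le_self hν
    _ ≤ _ := two_mul_le_squareIndicator_mul_sigma_zero (Nat.prime_of_mem_primeFactors hp) hν

lemma sum_Ioc_sigma_zero_le (M : ℕ) : ∑ m ∈ Ioc 0 M, (σ 0 m : ℝ) ≤ M * (1 + Real.log M) := by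
  rw [← Nat.cast_sum, sum_Ioc_sigma0_eq_sum_div, Nat.cast_sum]
  calc ∑ d ∈ Ioc 0 M, ((M / d : ℕ) : ℝ)
      ≤ ∑ d ∈ Ioc 0 M, (M : ℝ) / d := sum_le_sum fun d _ => Nat.cast_div_le
    _ = M * harmonic M := by
      rw [harmonic_eq_sum_Icc, show Icc 1 M = Ioc 0 M from Icc_add_one_left_eq_Ioc 0 M]
      push_cast
      simp only [mul_sum, div_eq_mul_inv]
    _ ≤ M * (1 + Real.log M) := by gcongr; exact harmonic_le_one_add_log M

lemma sum_Ioc_squareIndicator_div_le (N : ℕ) :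
    ∑ c ∈ Ioc 0 N, (squareIndicator c : ℝ) / c ≤ 2 := by
  calc ∑ c ∈ Ioc 0 N, (squareIndicator c : ℝ) / c
      = ∑ c ∈ (Ioc 0 N).filter IsSquare, (1 : ℝ) / c := by
        rw [sum_filter]
        refine sum_congr rfl fun c hc => ?_
        simp only [squareIndicator_apply, (mem_Ioc.mp hc).1.ne', ne_eq, not_false_eq_true,
          true_and]
        split_ifs <;> simp
    _ ≤ ∑ c ∈ (Ioc 0 N).image (fun k : ℕ => k ^ 2), (1 : ℝ) / c := by
        refine sum_le_sum_of_subset_of_nonneg ?_ fun _ _ _ => by positivity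
        intro c hc
        obtain ⟨hcN, r, rfl⟩ := mem_filter.mp hc
        obtain ⟨hr, hrN⟩ := mem_Ioc.mp hcN
        exact mem_image.mpr
          ⟨r, mem_Ioc.mpr ⟨Nat.pos_of_mul_pos_left hr, (Nat.le_mul_self r).trans hrN⟩, sq r⟩
    _ = ∑ k ∈ Ioc 0 N, ((k : ℝ) ^ 2)⁻¹ := by
        rw [sum_image fun a _ b _ h => Nat.pow_left_injective two_ne_zero h]
        push_cast
        simp only [one_div]
    _ ≤ 2 := by
        simpa [Ioo_add_one_right_eq_Ioc] using sum_Ioo_inv_sq_le (α := ℝ) 0 (N + 1)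

lemma sum_Ioc_squareIndicator_mul_sigma_zero_le (N : ℕ) :
    ∑ n ∈ Ioc 0 N, ((squareIndicator * σ 0) n : ℝ) ≤ 2 * N * (1 + Real.log N) := by
  have hlog (c : ℕ) : Real.log (N / c : ℕ) ≤ Real.log N := by
    rcases Nat.eq_zero_or_pos (N / c) with h | h
    · simp [h, Real.log_natCast_nonneg]
    · exact Real.log_le_log (by exact_mod_cast h) (by exact_mod_cast Nat.div_le_self N c)
  rw [← Nat.cast_sum, sum_Ioc_mul_eq_sum_sum, Nat.cast_sum]
  calc ∑ c ∈ Ioc 0 N, ((squareIndicator c * ∑ m ∈ Ioc 0 (N / c), σ 0 m : ℕ) : ℝ)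
      ≤ ∑ c ∈ Ioc 0 N, (squareIndicator c : ℝ) * (N / c * (1 + Real.log N)) := by
        refine sum_le_sum fun c _ => ?_
        push_cast
        gcongr
        calc ∑ m ∈ Ioc 0 (N / c), (σ 0 m : ℝ)
            ≤ (N / c : ℕ) * (1 + Real.log (N / c : ℕ)) := sum_Ioc_sigma_zero_le _
          _ ≤ N / c * (1 + Real.log N) := by
            gcongr ?_ * (1 + ?_)
            · exact Nat.cast_div_le
            · exact hlog c
    _ = (∑ c ∈ Ioc 0 N, (squareIndicator c : ℝ) / c) * N * (1 + Real.log N) := by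
        rw [sum_mul, sum_mul]
        exact sum_congr rfl fun c _ => by ring
    _ ≤ 2 * N * (1 + Real.log N) :=
        mul_le_mul_of_nonneg_right
          (mul_le_mul_of_nonneg_right (sum_Ioc_squareIndicator_div_le N) N.cast_nonneg)
          (by linarith [Real.log_natCast_nonneg N])

lemma sum_Ioc_two_pow_towerE_le (N : ℕ) :
    ∑ n ∈ Ioc 0 N, (2 : ℝ) ^ towerE n ≤ 2 * N * (1 + Real.log N) :=
  (sum_le_sum fun n hn => by
    exact_mod_cast two_pow_towerE_le_squareIndicator_mul_sigma_zero (mem_Ioc.mp hn).1.ne').trans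
    (sum_Ioc_squareIndicator_mul_sigma_zero_le N)

lemma rpow_three_mul_log_two {L : ℝ} (hL : 0 < L) :
    L ^ (3 * Real.log 2) = (2 : ℝ) ^ (3 * Real.log L) := by
  rw [Real.rpow_def_of_pos hL, Real.rpow_def_of_pos two_pos]
  ring_nf

open scoped Classical in
/-- For sufficiently large `x`, `#{n ≤ x : E(n) ≥ 3 log log x} = O(x / (log x)^μ)`,
where `μ = 3 log 2 - 1`. -/
theorem stmt_7 : ∃ C : ℝ, ∃ x₀ : ℕ, ∀ x : ℕ, x₀ ≤ x →
    (((Finset.Icc 1 x).filter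
        (fun n => 3 * Real.log (Real.log x) ≤ (towerE n : ℝ))).card : ℝ) ≤
      C * x / Real.log x ^ ((3 : ℝ) * Real.log 2 - 1) := by
  refine ⟨4, 3, fun x hx => ?_⟩
  set L := Real.log x
  set A := (Icc 1 x).filter (fun n => 3 * Real.log L ≤ (towerE n : ℝ))
  have hL : 1 ≤ L := by
    rw [Real.le_log_iff_exp_le (by positivity)]
    exact (Real.exp_one_lt_d9.trans (by norm_num)).le.trans (by exact_mod_cast hx : (3 : ℝ) ≤ x)
  have hmarkov : #A * L ^ (3 * Real.log 2) ≤ ∑ n ∈ Icc 1 x, (2 : ℝ) ^ towerE n := by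
    rw [← nsmul_eq_mul]
    refine (card_nsmul_le_sum A _ _ fun n hn => ?_).trans
      (sum_le_sum_of_subset_of_nonneg (filter_subset _ _) fun _ _ _ => by positivity)
    rw [rpow_three_mul_log_two (by positivity), ← Real.rpow_natCast]
    exact Real.rpow_le_rpow_of_exponent_le one_le_two (mem_filter.mp hn).2
  have hsum : ∑ n ∈ Icc 1 x, (2 : ℝ) ^ towerE n ≤ 4 * x * L := by
    rw [show Icc 1 x = Ioc 0 x from Icc_add_one_left_eq_Ioc 0 x]
    exact (sum_Ioc_two_pow_towerE_le x).trans (by nlinarith [(Nat.cast_nonneg x : (0 : ℝ) ≤ x)])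
  have hsplit : L ^ (3 * Real.log 2) = L ^ (3 * Real.log 2 - 1) * L := by
    rw [← Real.rpow_add_one (by positivity)]
    ring_nf
  have hbound : #A * L ^ (3 * Real.log 2 - 1) * L ≤ 4 * x * L := by
    rw [mul_assoc, ← hsplit]
    exact hmarkov.trans hsum
  rw [le_div_iff₀ (by positivity)]
  exact le_of_mul_le_mul_right hbound (by positivity)
end

section
/- If $t(n+1) = t(n+2) = \cdots = t(n+k)$ as planar rooted trees for some positive integers $n$ and $k$, then $k \leq 3$. -/
/-!
Among four consecutive integers one, `x`, is divisible by `4` and another, `y`, is `2 mod 4`.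
Both have smallest prime factor `2`, so the first subtrees of `t(x)` and `t(y)` are `t(ν₂ x)` and
`t(1)`; these differ because `ν₂ x ≥ 2` and `t(m)` has no subtrees only for `m ≤ 1`.
-/

inductive PTree : Type
  | node : List PTree → PTree

def primeTower (n : ℕ) : PTree :=
  PTree.node (((n.primeFactors.sort (· ≤ ·)).attach).map
    (fun p => primeTower (n.factorization p.1)))
decreasing_by
  exact factorization_lt ((Finset.mem_sort _).mp p.2)

def PTree.children : PTree → List PTree
  | .node l => l

theorem Finset.head?_sort_eq_min' {α : Type*} [LinearOrder α] {s : Finset α} (hs : s.Nonempty) :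
    (s.sort (· ≤ ·)).head? = some (s.min' hs) := by
  rw [min'_eq_sorted_zero, List.head?_eq_getElem?, List.getElem?_eq_getElem]

theorem Nat.min'_primeFactors {m : ℕ} (hm : 1 < m) :
    m.primeFactors.min' (Nat.nonempty_primeFactors.mpr hm) = m.minFac := by
  refine le_antisymm (Finset.min'_le _ _ ?_) (Finset.le_min' _ _ _ fun p hp => ?_)
  · exact Nat.mem_primeFactors.mpr ⟨Nat.minFac_prime hm.ne', Nat.minFac_dvd m, by omega⟩
  · exact Nat.minFac_le_of_dvd (Nat.prime_of_mem_primeFactors hp).two_le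
      (Nat.dvd_of_mem_primeFactors hp)

theorem Nat.factorization_two_of_mod_four_eq_two {m : ℕ} (hm : m % 4 = 2) :
    m.factorization 2 = 1 := by
  obtain ⟨k, rfl⟩ : ∃ k, m = 2 * (2 * k + 1) := ⟨m / 4, by omega⟩
  rw [Nat.factorization_mul two_ne_zero (by omega), Finsupp.add_apply,
    Nat.prime_two.factorization_self, Nat.factorization_eq_zero_of_not_dvd (by omega)]

theorem children_primeTower (m : ℕ) :
    (primeTower m).children =
      (m.primeFactors.sort (· ≤ ·)).map fun p => primeTower (m.factorization p) := by
  rw [primeTower, PTree.children]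
  exact List.attach_map_val (f := fun p => primeTower (m.factorization p))

theorem length_children_primeTower (m : ℕ) :
    (primeTower m).children.length = m.primeFactors.card := by
  rw [children_primeTower, List.length_map, Finset.length_sort]

theorem head?_children_primeTower {m : ℕ} (hm : 1 < m) :
    (primeTower m).children.head? = some (primeTower (m.factorization m.minFac)) := by
  rw [children_primeTower, List.head?_map,
    Finset.head?_sort_eq_min' (Nat.nonempty_primeFactors.mpr hm), Nat.min'_primeFactors hm,
    Option.map_some]

theorem primeTower_ne_primeTower_one {m : ℕ} (hm : 1 < m) : primeTower m ≠ primeTower 1 := by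
  intro h
  have hcard := congrArg (fun t => t.children.length) h
  simp only [length_children_primeTower, Nat.primeFactors_one, Finset.card_empty] at hcard
  exact (Nat.nonempty_primeFactors.mpr hm).card_pos.ne' hcard

theorem primeTower_factorization_minFac_eq {x y : ℕ} (hx : 1 < x) (hy : 1 < y)
    (h : primeTower x = primeTower y) :
    primeTower (x.factorization x.minFac) = primeTower (y.factorization y.minFac) := by
  have hhead := congrArg (fun t => t.children.head?) h
  rwa [head?_children_primeTower hx, head?_children_primeTower hy, Option.some_inj] at hhead

theorem primeTower_ne_of_four_dvd_of_mod_four_eq_two {x y : ℕ} (hx0 : x ≠ 0) (hx : 4 ∣ x)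
    (hy : y % 4 = 2) : primeTower x ≠ primeTower y := by
  intro h
  have hsub := primeTower_factorization_minFac_eq (by omega) (by omega) h
  rw [(Nat.minFac_eq_two_iff x).mpr (dvd_trans (by norm_num) hx),
    (Nat.minFac_eq_two_iff y).mpr (by omega), Nat.factorization_two_of_mod_four_eq_two hy] at hsub
  have hx2 : 2 ≤ x.factorization 2 := (Nat.prime_two.pow_dvd_iff_le_factorization hx0).mp hx
  exact primeTower_ne_primeTower_one (by omega) hsub

theorem exists_four_dvd_and_mod_four_eq_two (n : ℕ) :
    ∃ i j, 1 ≤ i ∧ i ≤ 4 ∧ 1 ≤ j ∧ j ≤ 4 ∧ 4 ∣ n + i ∧ (n + j) % 4 = 2 :=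
  ⟨4 - n % 4, (5 - n % 4) % 4 + 1, by omega, by omega, by omega, by omega, by omega, by omega⟩

theorem stmt_11_general (n k : ℕ)
    (h : ∀ i, 1 ≤ i → i ≤ k → primeTower (n + i) = primeTower (n + 1)) :
    k ≤ 3 := by
  by_contra! hk
  obtain ⟨i, j, hi1, hi4, hj1, hj4, hi, hj⟩ := exists_four_dvd_and_mod_four_eq_two n
  exact primeTower_ne_of_four_dvd_of_mod_four_eq_two (by omega) hi hj
    ((h i hi1 (by omega)).trans (h j hj1 (by omega)).symm)

/-- If `t(n+1) = t(n+2) = ⋯ = t(n+k)` as planar rooted trees, then `k ≤ 3`. -/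
theorem stmt_11 (n k : ℕ) (hn : 1 ≤ n) (hk : 1 ≤ k)
    (h : ∀ i, 1 ≤ i → i ≤ k → primeTower (n + i) = primeTower (n + 1)) :
    k ≤ 3 :=
  stmt_11_general n k h
end
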